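/- arXiv:1402.5549 — 5 statements merged into one kernel-verified Lean document; each statement's English description precedes it below -/
import Mathlib

section
/- Let G be a finite graph and X, Y, Z ⊆ V(G). If for every z ∈ Z there exists an X–Y separation of G of minimum order whose separator contains z, then there exists a nested set S of X–Y separations of minimum order such that Z is covered by the union of the separators of the separations in S. -/
/-- A separation of a graph `G` is an ordered pair `(A,B)` of vertex sets with
`A ∪ B = V(G)` and no edge of `G` joining `A ∖ B` to `B ∖ A`.
Its separator is `A ∩ B` and its order is `|A ∩ B|`. -/
def IsSeparation {V : Type} (G : SimpleGraph V) (A B : Set V) : Prop :=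
  A ∪ B = Set.univ ∧ ∀ a ∈ A \ B, ∀ b ∈ B \ A, ¬ G.Adj a b

/-- An `X`–`Y` separation is a separation `(A,B)` with `X ⊆ A` and `Y ⊆ B`. -/
def IsXYSeparation {V : Type} (G : SimpleGraph V) (X Y A B : Set V) : Prop :=
  IsSeparation G A B ∧ X ⊆ A ∧ Y ⊆ B

/-!
Minimum-order `X`–`Y` separations can be uncrossed: by submodularity of `|A ∩ B|`, the two
corners `(A ∩ A', B ∪ B')` and `(A ∪ A', B ∩ B')` of two of them are again of minimum order,
and a vertex of the separator of `(A, B)` lies in the separator of one of the corners. A corner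
is nested with every separation nested with both `(A, B)` and `(A', B')`. So, adding the
vertices of `Z` one at a time, a separation through the new vertex can be uncrossed with the
members of the nested family built so far, one after the other.
-/

open Set

variable {V : Type} {G : SimpleGraph V}

namespace IsSeparation

variable {A B A' B' : Set V}

theorem symm (h : IsSeparation G A B) : IsSeparation G B A :=
  ⟨union_comm A B ▸ h.1, fun b hb a ha hab => h.2 a ha b hb hab.symm⟩

theorem mem_left_of_notMem_right (h : IsSeparation G A B) {v : V} (hv : v ∉ B) : v ∈ A :=
  ((h.1 ▸ mem_univ v : v ∈ A ∪ B)).resolve_right hv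

theorem inter_union (h : IsSeparation G A B) (h' : IsSeparation G A' B') :
    IsSeparation G (A ∩ A') (B ∪ B') := by
  refine ⟨eq_univ_of_forall fun v => ?_, ?_⟩
  · by_cases hv : v ∈ B ∪ B'
    · exact Or.inr hv
    · rw [mem_union, not_or] at hv
      exact Or.inl ⟨h.mem_left_of_notMem_right hv.1, h'.mem_left_of_notMem_right hv.2⟩
  · rintro a ⟨⟨haA, haA'⟩, haB⟩ b ⟨-, hbA⟩
    rw [mem_union, not_or] at haB
    rw [mem_inter_iff, not_and_or] at hbA
    rcases hbA with hbA | hbA'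
    · exact h.2 a ⟨haA, haB.1⟩ b ⟨h.symm.mem_left_of_notMem_right hbA, hbA⟩
    · exact h'.2 a ⟨haA', haB.2⟩ b ⟨h'.symm.mem_left_of_notMem_right hbA', hbA'⟩

theorem union_inter (h : IsSeparation G A B) (h' : IsSeparation G A' B') :
    IsSeparation G (A ∪ A') (B ∩ B') :=
  (h.symm.inter_union h'.symm).symm

end IsSeparation

namespace IsXYSeparation

variable {X Y A B A' B' : Set V}

theorem inter_union (h : IsXYSeparation G X Y A B) (h' : IsXYSeparation G X Y A' B') :
    IsXYSeparation G X Y (A ∩ A') (B ∪ B') :=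
  ⟨h.1.inter_union h'.1, subset_inter h.2.1 h'.2.1, h.2.2.trans subset_union_left⟩

theorem union_inter (h : IsXYSeparation G X Y A B) (h' : IsXYSeparation G X Y A' B') :
    IsXYSeparation G X Y (A ∪ A') (B ∩ B') :=
  ⟨h.1.union_inter h'.1, h.2.1.trans subset_union_left, subset_inter h.2.2 h'.2.2⟩

end IsXYSeparation

theorem Set.ncard_inter_union_add_ncard_union_inter_le {α : Type*} [Finite α] (A B A' B' : Set α) :
    (A ∩ A' ∩ (B ∪ B')).ncard + ((A ∪ A') ∩ (B ∩ B')).ncard ≤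
      (A ∩ B).ncard + (A' ∩ B').ncard := by
  have h_union : A ∩ A' ∩ (B ∪ B') ∪ (A ∪ A') ∩ (B ∩ B') ⊆ A ∩ B ∪ A' ∩ B' := by
    rintro v (⟨⟨hA, hA'⟩, hB | hB'⟩ | ⟨hA | hA', hB, hB'⟩)
    exacts [Or.inl ⟨hA, hB⟩, Or.inr ⟨hA', hB'⟩, Or.inl ⟨hA, hB⟩, Or.inr ⟨hA', hB'⟩]
  have h_inter : A ∩ A' ∩ (B ∪ B') ∩ ((A ∪ A') ∩ (B ∩ B')) ⊆ A ∩ B ∩ (A' ∩ B') :=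
    fun v ⟨⟨⟨hA, hA'⟩, _⟩, _, hB, hB'⟩ => ⟨⟨hA, hB⟩, hA', hB'⟩
  rw [← ncard_union_add_ncard_inter, ← ncard_union_add_ncard_inter (A ∩ B)]
  exact add_le_add (ncard_le_ncard h_union) (ncard_le_ncard h_inter)

def Nested (p q : Set V × Set V) : Prop :=
  (p.1 ⊆ q.1 ∧ q.2 ⊆ p.2) ∨ (q.1 ⊆ p.1 ∧ p.2 ⊆ q.2)

namespace Nested

variable {p q r : Set V × Set V}

theorem refl (p : Set V × Set V) : Nested p p :=
  Or.inl ⟨subset_rfl, subset_rfl⟩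

theorem symm (h : Nested p q) : Nested q p :=
  Or.symm h

theorem inter_union (hp : Nested p r) (hq : Nested q r) : Nested (p.1 ∩ q.1, p.2 ∪ q.2) r := by
  rcases hp with hp | hp
  · exact Or.inl ⟨inter_subset_left.trans hp.1, hp.2.trans subset_union_left⟩
  rcases hq with hq | hq
  · exact Or.inl ⟨inter_subset_right.trans hq.1, hq.2.trans subset_union_right⟩
  · exact Or.inr ⟨subset_inter hp.1 hq.1, union_subset hp.2 hq.2⟩

theorem union_inter (hp : Nested p r) (hq : Nested q r) : Nested (p.1 ∪ q.1, p.2 ∩ q.2) r := by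
  rcases hp with hp | hp
  · rcases hq with hq | hq
    · exact Or.inl ⟨union_subset hp.1 hq.1, subset_inter hp.2 hq.2⟩
    · exact Or.inr ⟨hq.1.trans subset_union_right, inter_subset_right.trans hq.2⟩
  · exact Or.inr ⟨hp.1.trans subset_union_left, inter_subset_left.trans hp.2⟩

end Nested

def IsXYSeparationOfOrder (G : SimpleGraph V) (X Y : Set V) (m : ℕ) (p : Set V × Set V) : Prop :=
  IsXYSeparation G X Y p.1 p.2 ∧ (p.1 ∩ p.2).ncard = m

section MinimumOrder

variable [Finite V] {X Y : Set V} {m : ℕ}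

theorem IsXYSeparationOfOrder.corners
    (hmin : ∀ A B : Set V, IsXYSeparation G X Y A B → m ≤ (A ∩ B).ncard) {p q : Set V × Set V}
    (hp : IsXYSeparationOfOrder G X Y m p) (hq : IsXYSeparationOfOrder G X Y m q) :
    IsXYSeparationOfOrder G X Y m (p.1 ∩ q.1, p.2 ∪ q.2) ∧
      IsXYSeparationOfOrder G X Y m (p.1 ∪ q.1, p.2 ∩ q.2) := by
  have h_meet := hmin _ _ (hp.1.inter_union hq.1)
  have h_join := hmin _ _ (hp.1.union_inter hq.1)
  have h_submod := ncard_inter_union_add_ncard_union_inter_le p.1 p.2 q.1 q.2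
  rw [hp.2, hq.2] at h_submod
  refine ⟨⟨hp.1.inter_union hq.1, ?_⟩, ⟨hp.1.union_inter hq.1, ?_⟩⟩ <;> dsimp only <;> omega

theorem IsXYSeparationOfOrder.exists_uncross
    (hmin : ∀ A B : Set V, IsXYSeparation G X Y A B → m ≤ (A ∩ B).ncard) {p q : Set V × Set V}
    (hp : IsXYSeparationOfOrder G X Y m p) (hq : IsXYSeparationOfOrder G X Y m q) {z : V}
    (hz : z ∈ p.1 ∩ p.2) :
    ∃ p', IsXYSeparationOfOrder G X Y m p' ∧ z ∈ p'.1 ∩ p'.2 ∧ Nested p' q ∧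
      ∀ r, Nested p r → Nested q r → Nested p' r := by
  obtain ⟨h_meet, h_join⟩ := hp.corners hmin hq
  by_cases hzq : z ∈ q.2
  · exact ⟨_, h_join, ⟨Or.inl hz.1, hz.2, hzq⟩,
      Or.inr ⟨subset_union_right, inter_subset_right⟩, fun r => Nested.union_inter⟩
  · exact ⟨_, h_meet, ⟨⟨hz.1, hq.1.1.mem_left_of_notMem_right hzq⟩, Or.inl hz.2⟩,
      Or.inl ⟨inter_subset_right, subset_union_right⟩, fun r => Nested.inter_union⟩

theorem IsXYSeparationOfOrder.exists_nested_of_mem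
    (hmin : ∀ A B : Set V, IsXYSeparation G X Y A B → m ≤ (A ∩ B).ncard)
    (S : Finset (Set V × Set V)) (hS : ∀ q ∈ S, IsXYSeparationOfOrder G X Y m q)
    (hS_nested : ∀ q ∈ S, ∀ r ∈ S, Nested q r) {p : Set V × Set V}
    (hp : IsXYSeparationOfOrder G X Y m p) {z : V} (hz : z ∈ p.1 ∩ p.2) :
    ∃ p', IsXYSeparationOfOrder G X Y m p' ∧ z ∈ p'.1 ∩ p'.2 ∧ ∀ q ∈ S, Nested p' q := by
  classical
  induction S using Finset.induction_on with
  | empty => exact ⟨p, hp, hz, by simp⟩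
  | insert q S _ ih =>
    simp only [Finset.forall_mem_insert] at hS hS_nested
    obtain ⟨p', hp', hzp', hp'S⟩ := ih hS.2 (fun r hr => (hS_nested.2 r hr).2)
    obtain ⟨p'', hp'', hzp'', hp''q, hp''_of⟩ := hp'.exists_uncross hmin hS.1 hzp'
    refine ⟨p'', hp'', hzp'', (Finset.forall_mem_insert _ _ _).2 ⟨hp''q, fun r hr => ?_⟩⟩
    exact hp''_of r (hp'S r hr) (hS_nested.1.2 r hr)

theorem exists_nested_cover
    (hmin : ∀ A B : Set V, IsXYSeparation G X Y A B → m ≤ (A ∩ B).ncard) (T : Finset V)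
    (hT : ∀ z ∈ T, ∃ p, IsXYSeparationOfOrder G X Y m p ∧ z ∈ p.1 ∩ p.2) :
    ∃ S : Finset (Set V × Set V), (∀ p ∈ S, IsXYSeparationOfOrder G X Y m p) ∧
      (∀ p ∈ S, ∀ q ∈ S, Nested p q) ∧ ∀ z ∈ T, ∃ p ∈ S, z ∈ p.1 ∩ p.2 := by
  classical
  induction T using Finset.induction_on with
  | empty => exact ⟨∅, by simp, by simp, by simp⟩
  | insert z T _ ih =>
    simp only [Finset.forall_mem_insert] at hT ⊢
    obtain ⟨S, hS, hS_nested, hS_cover⟩ := ih hT.2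
    obtain ⟨p, hp, hzp⟩ := hT.1
    obtain ⟨p', hp', hzp', hp'S⟩ := hp.exists_nested_of_mem hmin S hS hS_nested hzp
    refine ⟨insert p' S, (Finset.forall_mem_insert _ _ _).2 ⟨hp', hS⟩, ?_,
      ⟨p', Finset.mem_insert_self p' S, hzp'⟩,
      fun w hw => (hS_cover w hw).imp fun q hq => ⟨Finset.mem_insert_of_mem hq.1, hq.2⟩⟩
    simp only [Finset.forall_mem_insert]
    exact ⟨⟨Nested.refl p', hp'S⟩, fun q hq => ⟨(hp'S q hq).symm, hS_nested q hq⟩⟩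

end MinimumOrder

/-- If every `z ∈ Z` lies in the separator of some `X`–`Y` separation of minimum
order `m`, then there is a nested set `S` of `X`–`Y` separations of order `m`
whose separators cover `Z`. -/
theorem stmt_2 {V : Type} [Fintype V] (G : SimpleGraph V) (X Y Z : Set V) (m : ℕ)
    (hmin : ∀ A B : Set V, IsXYSeparation G X Y A B → m ≤ (A ∩ B).ncard)
    (hz : ∀ z ∈ Z, ∃ A B : Set V, IsXYSeparation G X Y A B ∧ (A ∩ B).ncard = m ∧ z ∈ A ∩ B) :
    ∃ S : Set (Set V × Set V),
      (∀ p ∈ S, IsXYSeparation G X Y p.1 p.2 ∧ (p.1 ∩ p.2).ncard = m) ∧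
      (∀ p ∈ S, ∀ q ∈ S, (p.1 ⊆ q.1 ∧ q.2 ⊆ p.2) ∨ (q.1 ⊆ p.1 ∧ p.2 ⊆ q.2)) ∧
      Z ⊆ ⋃ p ∈ S, (p.1 ∩ p.2) := by
  classical
  obtain ⟨S, hS, hS_nested, hS_cover⟩ := exists_nested_cover hmin Z.toFinset fun z hzZ => by
    obtain ⟨A, B, hAB, hm, hzAB⟩ := hz z (mem_toFinset.1 hzZ)
    exact ⟨(A, B), ⟨hAB, hm⟩, hzAB⟩
  refine ⟨S, hS, hS_nested, fun z hzZ => ?_⟩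
  obtain ⟨p, hp, hzp⟩ := hS_cover z (mem_toFinset.2 hzZ)
  exact mem_biUnion hp hzp
end

section
/- For every integer k ≥ 2, the graph obtained from the complete graph K_{3k−1} by deleting the edges of a matching of size k is (3k−3)-connected but is not k-linked. -/
/-!
Connectivity: the non-edges of `K_{3k-1}` minus a matching form a matching, so once fewer than
`3k-3` vertices are deleted at least three remain, and two non-adjacent survivors are both adjacent
to any third one. Non-linkedness: take the deleted matching edges `{sᵢ, tᵢ}` as terminal pairs.
Since `sᵢ` and `tᵢ` are not adjacent, each path `Pᵢ` has an interior vertex, so `k` disjoint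
paths need `3k` vertices, one more than the graph has.
-/

/-- A graph `G` is `k`-linked if it has at least `2k` vertices and for every
choice of `2k` distinct vertices `s₁, …, s_k, t₁, …, t_k` there are pairwise
vertex-disjoint paths `P₁, …, P_k` with `P_i` joining `s_i` to `t_i`. -/
def IsLinked {V : Type} [Fintype V] (G : SimpleGraph V) (k : ℕ) : Prop :=
  2 * k ≤ Fintype.card V ∧
    ∀ s t : Fin k → V, Function.Injective (Sum.elim s t) →
      ∃ P : (i : Fin k) → G.Walk (s i) (t i),
        (∀ i, (P i).IsPath) ∧
        ∀ i j, i ≠ j → ∀ v, v ∈ (P i).support → v ∉ (P j).support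

/-- A graph `G` is `m`-connected if it has more than `m` vertices and deleting
any set of fewer than `m` vertices leaves it connected. -/
def IsKConnected {V : Type} [Fintype V] (G : SimpleGraph V) (k : ℕ) : Prop :=
  k < Fintype.card V ∧
    ∀ S : Finset V, S.card < k → (G.induce ((↑S : Set V)ᶜ)).Connected

/-- `x` and `y` form the `i`-th matching edge (the pair `{2i, 2i+1}`). -/
def MatchedPair (k : ℕ) (x y : Fin (3 * k - 1)) : Prop :=
  ∃ i : ℕ, i < k ∧ (x : ℕ) = 2 * i ∧ (y : ℕ) = 2 * i + 1

/-- The graph obtained from the complete graph `K_{3k-1}` by deleting the edges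
of a matching of size `k` (the pairs `{2i, 2i+1}` for `i < k`). -/
def cliqueMinusMatching (k : ℕ) : SimpleGraph (Fin (3 * k - 1)) :=
  SimpleGraph.fromRel (fun x y => ¬ (MatchedPair k x y ∨ MatchedPair k y x))



namespace SimpleGraph

variable {V : Type}

theorem Walk.IsPath.three_le_card_support_toFinset {G : SimpleGraph V} [DecidableEq V] {u v : V}
    {p : G.Walk u v} (hp : p.IsPath) (hne : u ≠ v) (hnadj : ¬ G.Adj u v) :
    3 ≤ p.support.toFinset.card := by
  have h0 : p.length ≠ 0 := fun h => hne (Walk.eq_of_length_eq_zero h)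
  have h1 : p.length ≠ 1 := fun h => hnadj (Walk.adj_of_length_eq_one h)
  rw [List.toFinset_card_of_nodup hp.support_nodup, Walk.length_support]
  omega

def NonAdjUnique (G : SimpleGraph V) : Prop :=
  ∀ x y z, x ≠ y → x ≠ z → ¬ G.Adj x y → ¬ G.Adj x z → y = z

theorem NonAdjUnique.induce {G : SimpleGraph V} (hG : G.NonAdjUnique) (s : Set V) :
    (G.induce s).NonAdjUnique := fun x y z hxy hxz hy hz =>
  Subtype.ext (hG x y z (Subtype.coe_ne_coe.mpr hxy) (Subtype.coe_ne_coe.mpr hxz) hy hz)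

theorem NonAdjUnique.connected [Finite V] {G : SimpleGraph V} (hG : G.NonAdjUnique)
    (hV : 3 ≤ Nat.card V) : G.Connected := by
  have := Fintype.ofFinite V
  obtain ⟨hnonempty, -⟩ := Nat.card_pos_iff.mp (by omega : 0 < Nat.card V)
  refine (connected_iff _).mpr ⟨fun a b => ?_, hnonempty⟩
  by_cases hab : a = b
  · exact hab ▸ Reachable.refl a
  by_cases hadj : G.Adj a b
  · exact hadj.reachable
  classical
  obtain ⟨z, -, hz⟩ := Finset.exists_mem_notMem_of_card_lt_card (s := {a, b}) (t := .univ)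
    (by rw [Finset.card_univ, ← Nat.card_eq_fintype_card]; grind [Finset.card_le_two])
  simp only [Finset.mem_insert, Finset.mem_singleton, not_or] at hz
  have haz : G.Adj a z := by_contra fun h => hz.2 (hG a z b (Ne.symm hz.1) hab h hadj)
  have hzb : G.Adj z b := by_contra fun h =>
    hz.1 (hG b z a (Ne.symm hz.2) (Ne.symm hab) (fun h' => h h'.symm) (fun h' => hadj h'.symm))
  exact haz.reachable.trans hzb.reachable

theorem NonAdjUnique.isKConnected [Fintype V] {G : SimpleGraph V} (hG : G.NonAdjUnique)
    (hV : 0 < Fintype.card V) : IsKConnected G (Fintype.card V - 2) := by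
  refine ⟨by omega, fun S hS => (hG.induce _).connected ?_⟩
  rw [Nat.card_coe_set_eq, Set.ncard_compl, Set.ncard_coe_finset, Nat.card_eq_fintype_card]
  omega

theorem not_isLinked_of_card_lt [Fintype V] {G : SimpleGraph V} {k : ℕ} (s t : Fin k → V)
    (hst : Function.Injective (Sum.elim s t)) (hnadj : ∀ i, ¬ G.Adj (s i) (t i))
    (hcard : Fintype.card V < 3 * k) : ¬ IsLinked G k := by
  classical
  rintro ⟨-, hlinked⟩
  obtain ⟨P, hpath, hdisj⟩ := hlinked s t hst
  have hne : ∀ i, s i ≠ t i := fun i h => Sum.inl_ne_inr (hst h)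
  have hpairwise : ((Finset.univ : Finset (Fin k)) : Set (Fin k)).PairwiseDisjoint
      (fun i => (P i).support.toFinset) := fun i _ j _ hij =>
    Finset.disjoint_left.mpr fun v hvi hvj =>
      hdisj i j hij v (List.mem_toFinset.mp hvi) (List.mem_toFinset.mp hvj)
  have := calc
    3 * k = ∑ _ : Fin k, 3 := by simp [mul_comm]
    _ ≤ ∑ i, (P i).support.toFinset.card :=
      Finset.sum_le_sum fun i _ => (hpath i).three_le_card_support_toFinset (hne i) (hnadj i)
    _ = (Finset.univ.biUnion fun i => (P i).support.toFinset).card :=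
      (Finset.card_biUnion hpairwise).symm
    _ ≤ Fintype.card V := Finset.card_le_univ _
  omega

end SimpleGraph

open SimpleGraph

theorem cliqueMinusMatching_adj (k : ℕ) (x y : Fin (3 * k - 1)) :
    (cliqueMinusMatching k).Adj x y ↔ x ≠ y ∧ ¬ (MatchedPair k x y ∨ MatchedPair k y x) := by
  simp only [cliqueMinusMatching, fromRel_adj]
  tauto

theorem cliqueMinusMatching_nonAdjUnique (k : ℕ) : (cliqueMinusMatching k).NonAdjUnique := by
  intro x y z hxy hxz hy hz
  simp only [cliqueMinusMatching_adj, not_and, not_not] at hy hz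
  rcases hy hxy with ⟨i, -, hi⟩ | ⟨i, -, hi⟩ <;> rcases hz hxz with ⟨j, -, hj⟩ | ⟨j, -, hj⟩ <;>
    exact Fin.ext (by omega)

theorem cliqueMinusMatching_isKConnected {k : ℕ} (hk : 0 < k) :
    IsKConnected (cliqueMinusMatching k) (3 * k - 3) := by
  have := (cliqueMinusMatching_nonAdjUnique k).isKConnected (by rw [Fintype.card_fin]; omega)
  rwa [Fintype.card_fin, show 3 * k - 1 - 2 = 3 * k - 3 by omega] at this

theorem cliqueMinusMatching_not_isLinked {k : ℕ} (hk : 0 < k) :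
    ¬ IsLinked (cliqueMinusMatching k) k := by
  let s : Fin k → Fin (3 * k - 1) := fun i => ⟨2 * i, by omega⟩
  let t : Fin k → Fin (3 * k - 1) := fun i => ⟨2 * i + 1, by omega⟩
  refine not_isLinked_of_card_lt s t ?_ (fun i h => ?_) (by rw [Fintype.card_fin]; omega)
  · refine Function.Injective.sumElim (fun i j h => ?_) (fun i j h => ?_) (fun i j h => ?_) <;>
      have := congrArg Fin.val h <;> simp only [s, t] at this
    · exact Fin.ext (by omega)
    · exact Fin.ext (by omega)
    · omega
  · exact ((cliqueMinusMatching_adj k _ _).mp h).2 (.inl ⟨i, i.isLt, rfl, rfl⟩)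

/-- For `k ≥ 2`, the graph `K_{3k-1}` minus a matching of size `k` is
`(3k-3)`-connected but not `k`-linked. -/
theorem stmt_5 (k : ℕ) (hk : 2 ≤ k) :
    IsKConnected (cliqueMinusMatching k) (3 * k - 3) ∧
      ¬ IsLinked (cliqueMinusMatching k) k :=
  ⟨cliqueMinusMatching_isKConnected (by omega), cliqueMinusMatching_not_isLinked (by omega)⟩
end

section
/- For any two distinct vertex sets X and Y of the same size k in a finite connected graph H, and any marginal set A ⊆ V(H), there is a balanced X–Y movement of length at most k on H such that every vertex of A is strongly singular with respect to this movement. -/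
/-!
Prune `H` so that each vertex of `A` keeps a single edge, to a neighbour outside `A`: since
`H - A` is connected, the pruned graph is still connected, and the vertices of `A` have become
leaves. It then suffices to move `S` to `T` (with `|S| = |T|`) inside a connected vertex set `U`
so that the moves stay in `U`, the configurations stay in `S ∪ T`, and every leaf is occupied
during an interval of time; a leaf lies on a path only as an endpoint, so it is then strongly
singular.

This goes by induction on `|U|`, removing a vertex `ℓ` that leaves `U - ℓ` connected. If
`ℓ ∈ S ∩ T`, its token stays put. If `ℓ ∈ S \ T`, walk in `U` from `ℓ` towards `T` and stop at
the first vertex `t ∈ T` that is not a leaf in `S`; the path to `t` meets `T` only at `t`, since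
a leaf cannot be an inner vertex of a path. Move `S - ℓ` to `T - t` inside `U - ℓ`, then the
token on `ℓ` along the path to `t`. The case `ℓ ∈ T \ S` is the reverse movement.
-/

/-- A movement of length `n` on a graph `H` (moves are nontrivial paths encoded
by their vertex lists). -/
def IsMovement {V : Type} [DecidableEq V] (H : SimpleGraph V) (n : ℕ)
    (X : ℕ → Finset V) (M : ℕ → List V) : Prop :=
  ∀ i < n,
    (M i).Chain' H.Adj ∧ (M i).Nodup ∧ 2 ≤ (M i).length ∧
    (∃ u v : V, u ≠ v ∧ (M i).head? = some u ∧ (M i).getLast? = some v ∧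
      symmDiff (X i) (X (i + 1)) = {u, v}) ∧
    (∀ w ∈ M i, w ∉ X i ∩ X (i + 1))

/-- A movement is balanced if in each move exactly one token leaves the old
configuration and exactly one vertex enters the new one (equivalently, the
induced pairing is a perfect matching from `X₀` to `Xₙ`). -/
def BalancedMovement {V : Type} [DecidableEq V] (n : ℕ) (X : ℕ → Finset V) : Prop :=
  ∀ i < n, (X i \ X (i + 1)).card = 1 ∧ (X (i + 1) \ X i).card = 1

/-- A vertex `x` is strongly singular with respect to a movement of length `n`
if no move contains `x` as an inner vertex and `{i : x ∈ X i}` is an integer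
interval that is empty or contains `0` or `n`. -/
def StronglySingular {V : Type} [DecidableEq V] (n : ℕ) (X : ℕ → Finset V)
    (M : ℕ → List V) (x : V) : Prop :=
  (∀ i < n, x ∈ M i → (M i).head? = some x ∨ (M i).getLast? = some x) ∧
  (∀ i j l : ℕ, i ≤ j → j ≤ l → l ≤ n → x ∈ X i → x ∈ X l → x ∈ X j) ∧
  ((∀ i ≤ n, x ∉ X i) ∨ x ∈ X 0 ∨ x ∈ X n)

/-- A set `A` of vertices is marginal in `H` if `H − A` is connected and every
vertex of `A` has a neighbour outside `A`. -/
def IsMarginal {V : Type} (H : SimpleGraph V) (A : Set V) : Prop :=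
  (H.induce Aᶜ).Connected ∧ ∀ a ∈ A, ∃ b, b ∉ A ∧ H.Adj a b

open SimpleGraph Finset

variable {V : Type}

namespace SimpleGraph

variable {G : SimpleGraph V}

theorem Walk.exists_support_eq_map_val_of_induce {s : Set V} :
    ∀ {a b : s} (q : (G.induce s).Walk a b),
      ∃ p : G.Walk a b, p.support = q.support.map Subtype.val
  | _, _, .nil => ⟨.nil, rfl⟩
  | _, _, .cons h q => by
    obtain ⟨p, hp⟩ := exists_support_eq_map_val_of_induce q
    exact ⟨.cons (induce_adj.1 h) p, by rw [Walk.support_cons, hp]; rfl⟩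

theorem preconnected_induce_iff_exists_walk {s : Set V} :
    (G.induce s).Preconnected ↔ ∀ x ∈ s, ∀ y ∈ s, ∃ p : G.Walk x y, ∀ w ∈ p.support, w ∈ s := by
  refine ⟨fun h x hx y hy => ?_, fun h x y => ?_⟩
  · obtain ⟨p, hp⟩ := (h ⟨x, hx⟩ ⟨y, hy⟩).some.exists_support_eq_map_val_of_induce
    refine ⟨p, ?_⟩
    simp only [hp, List.mem_map]
    rintro _ ⟨z, -, rfl⟩
    exact z.2
  · obtain ⟨p, hp⟩ := h x x.2 y y.2
    exact ⟨p.induce s hp⟩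

theorem exists_preconnected_induce_erase [DecidableEq V] {U : Finset V}
    (hU : (G.induce (U : Set V)).Preconnected) (hU₂ : 1 < U.card) :
    ∃ ℓ ∈ U, (G.induce (U.erase ℓ : Set V)).Preconnected := by
  have : Nontrivial (U : Set V) := (one_lt_card_iff_nontrivial.1 hU₂).coe_sort
  obtain ⟨⟨ℓ, hℓ⟩, h⟩ :=
    (Connected.mk hU).exists_connected_induce_compl_singleton_of_finite_nontrivial
  refine ⟨ℓ, hℓ, preconnected_induce_iff_exists_walk.2 fun x hx y hy => ?_⟩
  obtain ⟨p, hp⟩ := preconnected_induce_iff_exists_walk.1 h.preconnected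
    ⟨x, mem_of_mem_erase hx⟩ (by simpa using ne_of_mem_erase hx)
    ⟨y, mem_of_mem_erase hy⟩ (by simpa using ne_of_mem_erase hy)
  obtain ⟨p', hp'⟩ := p.exists_support_eq_map_val_of_induce
  refine ⟨p', ?_⟩
  simp only [hp', List.mem_map]
  rintro _ ⟨z, hz, rfl⟩
  exact mem_erase.2 ⟨fun h => hp z hz (Subtype.ext h), z.2⟩

theorem Walk.exists_walk_to_first_mem {Q : Set V} : ∀ {u v : V} (p : G.Walk u v), v ∈ Q →
    ∃ t ∈ Q, ∃ q : G.Walk u t, q.support ⊆ p.support ∧ ∀ w ∈ q.support, w ∈ Q → w = t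
  | u, _, .nil, hv => ⟨u, hv, .nil, by simp, by simp⟩
  | u, _, .cons h p, hv => by
    by_cases hu : u ∈ Q
    · exact ⟨u, hu, .nil, by simp, by simp⟩
    obtain ⟨t, ht, q, hqp, hqQ⟩ := p.exists_walk_to_first_mem hv
    refine ⟨t, ht, .cons h q, by simpa using List.subset_cons_of_subset u hqp, ?_⟩
    rintro w hw hwQ
    rcases List.mem_cons.1 (Walk.support_cons h q ▸ hw) with rfl | hw
    · exact absurd hwQ hu
    · exact hqQ w hw hwQ

theorem head?_eq_or_getLast?_eq_of_subsingleton_neighborSet {L : List V}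
    (hc : L.IsChain G.Adj) (hn : L.Nodup) {v : V} (hv : v ∈ L)
    (hsing : (G.neighborSet v).Subsingleton) : L.head? = some v ∨ L.getLast? = some v := by
  have hne : L ≠ [] := List.ne_nil_of_mem hv
  have hp : (Walk.ofSupport L hne hc).IsPath := .mk' (by rwa [Walk.support_ofSupport])
  by_contra! h
  refine hp.not_mem_support_of_subsingleton_neighborSet ?_ ?_ hsing
    (by rwa [Walk.support_ofSupport])
  · rintro rfl; exact h.1 (List.head?_eq_some_head hne)
  · rintro rfl; exact h.2 (List.getLast?_eq_some_getLast hne)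

def pruneAt (H : SimpleGraph V) (A : Set V) (b : V → V) : SimpleGraph V where
  Adj x y := H.Adj x y ∧ (x ∈ A → y = b x) ∧ (y ∈ A → x = b y)
  symm := ⟨fun _ _ h => ⟨h.1.symm, h.2.2, h.2.1⟩⟩
  loopless := ⟨fun x h => H.loopless.irrefl x h.1⟩

end SimpleGraph

theorem IsMarginal.exists_le_preconnected_neighborSet_subsingleton {H : SimpleGraph V}
    {A : Set V} (hA : IsMarginal H A) :
    ∃ G ≤ H, G.Preconnected ∧ ∀ a ∈ A, (G.neighborSet a).Subsingleton := by
  choose! b hbA hbAdj using hA.2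
  let G := H.pruneAt A b
  have houtside : ∀ x y, x ∉ A → y ∉ A → G.Reachable x y := fun x y hx hy =>
    (hA.1.preconnected ⟨x, hx⟩ ⟨y, hy⟩).map (show H.induce Aᶜ →g G from
      ⟨Subtype.val, fun {u v} huv => ⟨huv, fun hu => absurd hu u.2, fun hv => absurd hv v.2⟩⟩)
  have hexit : ∀ x, ∃ x' ∉ A, G.Reachable x x' := fun x => by
    by_cases hx : x ∈ A
    · exact ⟨b x, hbA x hx,
        Adj.reachable ⟨hbAdj x hx, fun _ => rfl, fun h => absurd h (hbA x hx)⟩⟩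
    · exact ⟨x, hx, .refl x⟩
  refine ⟨G, fun _ _ h => h.1, fun x y => ?_,
    fun a ha _ hy _ hz => (hy.2.1 ha).trans (hz.2.1 ha).symm⟩
  obtain ⟨x', hx', hxx'⟩ := hexit x
  obtain ⟨y', hy', hyy'⟩ := hexit y
  exact hxx'.trans ((houtside x' y' hx' hy').trans hyy'.symm)

section Movement

variable [DecidableEq V] {G H : SimpleGraph V}

def IsMove (G : SimpleGraph V) (X X' : Finset V) (m : List V) : Prop :=
  m.IsChain G.Adj ∧ m.Nodup ∧ 2 ≤ m.length ∧
    (∃ u v : V, u ≠ v ∧ m.head? = some u ∧ m.getLast? = some v ∧ symmDiff X X' = {u, v}) ∧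
    ∀ w ∈ m, w ∉ X ∩ X'

theorem IsMove.mono {X X' : Finset V} {m : List V} (h : IsMove G X X' m) (hGH : G ≤ H) :
    IsMove H X X' m :=
  ⟨h.1.imp fun _ _ hadj => hGH hadj, h.2⟩

theorem IsMove.reverse {X X' : Finset V} {m : List V} (h : IsMove G X X' m) :
    IsMove G X' X m.reverse := by
  obtain ⟨hc, hn, hl, ⟨u, v, huv, hu, hv, hsd⟩, hX⟩ := h
  refine ⟨List.isChain_reverse.2 (hc.imp fun _ _ hadj => hadj.symm), List.nodup_reverse.2 hn,
    by simpa using hl, ⟨v, u, huv.symm, by simpa [List.head?_reverse] using hv,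
      by simpa [List.getLast?_reverse] using hu, by rw [symmDiff_comm, hsd, pair_comm]⟩,
    fun w hw => by rw [inter_comm]; exact hX w (List.mem_reverse.1 hw)⟩

theorem IsMove.insert {X X' : Finset V} {m : List V} {ℓ : V} (h : IsMove G X X' m)
    (hX : ℓ ∉ X) (hX' : ℓ ∉ X') (hm : ℓ ∉ m) : IsMove G (insert ℓ X) (insert ℓ X') m := by
  obtain ⟨hc, hn, hl, ⟨u, v, huv, hu, hv, hsd⟩, hXm⟩ := h
  refine ⟨hc, hn, hl, ⟨u, v, huv, hu, hv, ?_⟩, fun w hw => ?_⟩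
  · rw [← hsd]
    ext w
    by_cases hw : w = ℓ
    · subst hw; simp [mem_symmDiff, hX, hX']
    · simp [mem_symmDiff, hw]
  · have hwℓ : w ≠ ℓ := by rintro rfl; exact hm hw
    simpa [hwℓ] using hXm w hw

theorem isMove_support_of_isPath {X X' : Finset V} {u v : V} {p : G.Walk u v} (hp : p.IsPath)
    (hu : X \ X' = {u}) (hv : X' \ X = {v}) (hpX : ∀ w ∈ p.support, w ∉ X ∩ X') :
    IsMove G X X' p.support := by
  have huv : u ≠ v := by
    have hu' : u ∈ X \ X' := hu ▸ mem_singleton_self u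
    have hv' : v ∈ X' \ X := hv ▸ mem_singleton_self v
    rintro rfl
    exact (mem_sdiff.1 hv').2 (mem_sdiff.1 hu').1
  refine ⟨p.isChain_adj_support, hp.support_nodup, ?_, ⟨u, v, huv, ?_, ?_, ?_⟩, hpX⟩
  · have : p.length ≠ 0 := fun h => huv (Walk.eq_of_length_eq_zero h)
    rw [Walk.length_support]; omega
  · rw [List.head?_eq_some_head p.support_ne_nil, Walk.head_support]
  · rw [List.getLast?_eq_some_getLast p.support_ne_nil, Walk.getLast_support]
  · rw [symmDiff_def, hu, hv]; rfl

structure IsTidyMovement (G : SimpleGraph V) (U S T : Finset V) (n : ℕ) (Xs : ℕ → Finset V)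
    (M : ℕ → List V) : Prop where
  move : ∀ i < n, IsMove G (Xs i) (Xs (i + 1)) (M i)
  balanced : BalancedMovement n Xs
  mem_of_mem_move : ∀ i < n, ∀ w ∈ M i, w ∈ U
  start : Xs 0 = S
  finish : Xs n = T
  subset_union : ∀ i ≤ n, Xs i ⊆ S ∪ T
  interval : ∀ v, (G.neighborSet v).Subsingleton →
    ∀ i j l, i ≤ j → j ≤ l → l ≤ n → v ∈ Xs i → v ∈ Xs l → v ∈ Xs j

namespace IsTidyMovement

variable {U S T : Finset V} {n : ℕ} {Xs : ℕ → Finset V} {M : ℕ → List V}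

theorem refl : IsTidyMovement G U S S 0 (fun _ => S) (fun _ => []) where
  move _ h := absurd h (Nat.not_lt_zero _)
  balanced _ h := absurd h (Nat.not_lt_zero _)
  mem_of_mem_move _ h := absurd h (Nat.not_lt_zero _)
  start := rfl
  finish := rfl
  subset_union _ _ := subset_union_left
  interval _ _ _ _ _ _ _ _ h _ := h

theorem mono {U' : Finset V} (h : IsTidyMovement G U S T n Xs M) (hUU' : U ⊆ U') :
    IsTidyMovement G U' S T n Xs M :=
  { h with mem_of_mem_move := fun i hi w hw => hUU' (h.mem_of_mem_move i hi w hw) }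

theorem reverse (h : IsTidyMovement G U S T n Xs M) :
    IsTidyMovement G U T S n (fun i => Xs (n - i)) (fun i => (M (n - 1 - i)).reverse) where
  move i hi := by
    rw [show n - i = n - 1 - i + 1 by omega, show n - (i + 1) = n - 1 - i by omega]
    exact (h.move _ (by omega)).reverse
  balanced i hi := by
    dsimp only
    rw [show n - i = n - 1 - i + 1 by omega, show n - (i + 1) = n - 1 - i by omega]
    exact (h.balanced _ (by omega)).symm
  mem_of_mem_move i hi w hw := h.mem_of_mem_move _ (by omega) w (List.mem_reverse.1 hw)
  start := by rw [Nat.sub_zero, h.finish]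
  finish := by rw [Nat.sub_self, h.start]
  subset_union i _ := union_comm S T ▸ h.subset_union _ (Nat.sub_le n i)
  interval v hv i j l hij hjl hln hi hl :=
    h.interval v hv (n - l) (n - j) (n - i) (by omega) (by omega) (Nat.sub_le n i) hl hi

theorem insert {ℓ : V} (h : IsTidyMovement G U S T n Xs M) (hℓU : ℓ ∉ U) (hℓS : ℓ ∉ S)
    (hℓT : ℓ ∉ T) :
    IsTidyMovement G (insert ℓ U) (insert ℓ S) (insert ℓ T) n (fun i => insert ℓ (Xs i)) M := by
  have hℓXs : ∀ i ≤ n, ℓ ∉ Xs i := fun i hi hℓ => by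
    simpa [hℓS, hℓT] using h.subset_union i hi hℓ
  refine ⟨fun i hi => ?_, fun i hi => ?_, fun i hi w hw => ?_, ?_, ?_, fun i hi => ?_, ?_⟩
  · exact (h.move i hi).insert (hℓXs i hi.le) (hℓXs (i + 1) hi)
      fun hℓ => hℓU (h.mem_of_mem_move i hi ℓ hℓ)
  · rw [insert_sdiff_insert, insert_sdiff_insert, sdiff_insert_of_notMem (hℓXs i hi.le),
      sdiff_insert_of_notMem (hℓXs (i + 1) hi)]
    exact h.balanced i hi
  · exact mem_insert_of_mem (h.mem_of_mem_move i hi w hw)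
  · exact congrArg _ h.start
  · exact congrArg _ h.finish
  · rw [← insert_union_distrib]
    exact insert_subset_insert ℓ (h.subset_union i hi)
  · intro v hv i j l hij hjl hln hvi hvl
    by_cases hvℓ : v = ℓ
    · exact hvℓ ▸ mem_insert_self v _
    simp only [mem_insert, hvℓ, false_or] at hvi hvl ⊢
    exact h.interval v hv i j l hij hjl hln hvi hvl

theorem snoc {T' : Finset V} {m : List V} (h : IsTidyMovement G U S T' n Xs M)
    (hm : IsMove G T' T m) (hbal : (T' \ T).card = 1 ∧ (T \ T').card = 1)
    (hmU : ∀ w ∈ m, w ∈ U) (hT' : T' ⊆ S ∪ T)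
    (hleaf : ∀ v, (G.neighborSet v).Subsingleton → v ∈ T → v ∉ T' → v ∉ S) :
    IsTidyMovement G U S T (n + 1) (Function.update Xs (n + 1) T) (Function.update M n m) := by
  have hXs : ∀ i ≤ n, Function.update Xs (n + 1) T i = Xs i := fun i hi =>
    Function.update_of_ne (by omega) _ _
  have hM : ∀ i < n, Function.update M n m i = M i := fun i hi =>
    Function.update_of_ne hi.ne _ _
  refine ⟨fun i hi => ?_, fun i hi => ?_, fun i hi w hw => ?_, by rw [hXs 0 n.zero_le, h.start],
    Function.update_self .., fun i hi => ?_, ?_⟩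
  · rcases Nat.lt_succ_iff_lt_or_eq.1 hi with hi | rfl
    · rw [hXs i hi.le, hXs (i + 1) hi, hM i hi]; exact h.move i hi
    · rw [hXs i le_rfl, Function.update_self, Function.update_self, h.finish]; exact hm
  · rcases Nat.lt_succ_iff_lt_or_eq.1 hi with hi | rfl
    · rw [hXs i hi.le, hXs (i + 1) hi]; exact h.balanced i hi
    · rw [hXs i le_rfl, Function.update_self, h.finish]; exact hbal
  · rcases Nat.lt_succ_iff_lt_or_eq.1 hi with hi | rfl
    · rw [hM i hi] at hw; exact h.mem_of_mem_move i hi w hw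
    · rw [Function.update_self] at hw; exact hmU w hw
  · rcases Nat.le_succ_iff.1 hi with hi | rfl
    · rw [hXs i hi]; exact (h.subset_union i hi).trans (union_subset subset_union_left hT')
    · rw [Function.update_self]; exact subset_union_right
  · intro v hv i j l hij hjl hln hvi hvl
    rcases Nat.lt_or_ge n j with hj | hj
    · rwa [show j = l by omega]
    rw [hXs i (hij.trans hj)] at hvi
    rw [hXs j hj]
    rcases Nat.lt_or_ge n l with hl | hl
    · rw [show l = n + 1 by omega, Function.update_self] at hvl
      by_cases hvT' : v ∈ T'
      · exact h.interval v hv i j n hij hj le_rfl hvi (h.finish ▸ hvT')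
      · simpa [hleaf v hv hvl hvT', hvT'] using h.subset_union i (hij.trans hj) hvi
    · rw [hXs l hl] at hvl
      exact h.interval v hv i j l hij hjl hl hvi hvl

theorem stronglySingular (h : IsTidyMovement G U S T n Xs M) {v : V}
    (hv : (G.neighborSet v).Subsingleton) : StronglySingular n Xs M v := by
  refine ⟨fun i hi hvM => ?_, h.interval v hv, ?_⟩
  · obtain ⟨hc, hn, -⟩ := h.move i hi
    exact head?_eq_or_getLast?_eq_of_subsingleton_neighborSet hc hn hvM hv
  · by_cases hvS : v ∈ S
    · exact Or.inr (Or.inl (h.start ▸ hvS))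
    by_cases hvT : v ∈ T
    · exact Or.inr (Or.inr (h.finish ▸ hvT))
    exact Or.inl fun i hi hvX => by simpa [hvS, hvT] using h.subset_union i hi hvX

end IsTidyMovement

def TidyMovable (G : SimpleGraph V) (U S T : Finset V) : Prop :=
  ∃ n ≤ S.card, ∃ Xs M, IsTidyMovement G U S T n Xs M

theorem exists_isPath_meeting_only_at_end {U S T : Finset V} {ℓ t₀ : V}
    (hU : (G.induce (U : Set V)).Preconnected) (hT : T ⊆ U) (hℓU : ℓ ∈ U) (hℓT : ℓ ∉ T)
    (ht₀T : t₀ ∈ T) (ht₀S : t₀ ∉ S) :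
    ∃ t ∈ T, ¬((G.neighborSet t).Subsingleton ∧ t ∈ S) ∧ ∃ p : G.Walk ℓ t, p.IsPath ∧
      (∀ w ∈ p.support, w ∈ U) ∧ ∀ w ∈ p.support, w ∈ T → w = t := by
  obtain ⟨p₀, hp₀U⟩ := preconnected_induce_iff_exists_walk.1 hU ℓ hℓU t₀ (hT ht₀T)
  obtain ⟨t, ⟨htT, htS⟩, q, hqp₀, hqQ⟩ := p₀.exists_walk_to_first_mem
    (Q := {v | v ∈ T ∧ ¬((G.neighborSet v).Subsingleton ∧ v ∈ S)}) ⟨ht₀T, fun h => ht₀S h.2⟩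
  have hsub : ∀ w ∈ q.bypass.support, w ∈ q.support := fun w hw =>
    q.support_bypass_subset_support hw
  refine ⟨t, htT, htS, q.bypass, q.bypass_isPath, fun w hw => hp₀U w (hqp₀ (hsub w hw)),
    fun w hw hwT => ?_⟩
  by_contra hwt
  have hleaf : (G.neighborSet w).Subsingleton := by
    by_contra hw'
    exact hwt (hqQ w (hsub w hw) ⟨hwT, fun h => hw' h.1⟩)
  exact q.bypass_isPath.not_mem_support_of_subsingleton_neighborSet
    (by rintro rfl; exact hℓT hwT) hwt hleaf hw

theorem tidyMovable_of_mem_sdiff {U S T : Finset V} {ℓ t₀ : V}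
    (ih : ∀ S' T', S' ⊆ U.erase ℓ → T' ⊆ U.erase ℓ → S'.card = T'.card →
      TidyMovable G (U.erase ℓ) S' T')
    (hU : (G.induce (U : Set V)).Preconnected) (hS : S ⊆ U) (hT : T ⊆ U)
    (hcard : S.card = T.card) (hℓS : ℓ ∈ S) (hℓT : ℓ ∉ T) (ht₀T : t₀ ∈ T) (ht₀S : t₀ ∉ S) :
    TidyMovable G U S T := by
  have hℓU := hS hℓS
  obtain ⟨t, htT, htS, p, hp, hpU, hpT⟩ :=
    exists_isPath_meeting_only_at_end hU hT hℓU hℓT ht₀T ht₀S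
  have hℓt : ℓ ∉ T.erase t := fun h => hℓT (mem_of_mem_erase h)
  obtain ⟨n, hn, Xs, M, h⟩ := ih (S.erase ℓ) (T.erase t) (erase_subset_erase ℓ hS)
    (subset_erase.2 ⟨(erase_subset t T).trans hT, hℓt⟩)
    (by rw [card_erase_of_mem hℓS, card_erase_of_mem htT, hcard])
  have h' := h.insert (notMem_erase ℓ U) (notMem_erase ℓ S) hℓt
  rw [insert_erase hℓU, insert_erase hℓS] at h'
  have hout : insert ℓ (T.erase t) \ T = {ℓ} := by
    ext w; simp only [mem_sdiff, mem_insert, mem_erase, mem_singleton]; grind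
  have hin : T \ insert ℓ (T.erase t) = {t} := by
    ext w; simp only [mem_sdiff, mem_insert, mem_erase, mem_singleton]; grind
  refine ⟨n + 1, by rw [card_erase_of_mem hℓS] at hn; have := card_pos.2 ⟨ℓ, hℓS⟩; omega, _, _,
    h'.snoc (isMove_support_of_isPath hp hout hin fun w hw hwX => ?_) (by simp [hout, hin]) hpU
      (insert_subset (mem_union_left T hℓS) ((erase_subset t T).trans subset_union_right))
      fun v hv hvT hvX => ?_⟩
  · obtain rfl := hpT w hw (mem_inter.1 hwX).2
    have hwℓ : w = ℓ := by simpa using (mem_inter.1 hwX).1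
    exact hℓT (hwℓ ▸ htT)
  · have : v = t := by by_contra hvt; exact hvX (mem_insert_of_mem (mem_erase.2 ⟨hvt, hvT⟩))
    exact fun hvS => htS ⟨this ▸ hv, this ▸ hvS⟩

theorem tidyMovable_of_preconnected {U S T : Finset V}
    (hU : (G.induce (U : Set V)).Preconnected) (hS : S ⊆ U) (hT : T ⊆ U)
    (hcard : S.card = T.card) : TidyMovable G U S T := by
  induction U using Finset.strongInduction generalizing S T with
  | H U ih =>
  by_cases hST : S = T
  · subst hST
    exact ⟨0, Nat.zero_le _, _, _, IsTidyMovement.refl⟩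
  obtain ⟨s₀, hs₀S, hs₀T⟩ := not_subset.1 fun h => hST (eq_of_subset_of_card_le h hcard.ge)
  obtain ⟨t₀, ht₀T, ht₀S⟩ := not_subset.1 fun h => hST (eq_of_subset_of_card_le h hcard.le).symm
  obtain ⟨ℓ, hℓU, hU'⟩ := exists_preconnected_induce_erase hU
    (one_lt_card.2 ⟨s₀, hS hs₀S, t₀, hT ht₀T, fun h => hs₀T (h ▸ ht₀T)⟩)
  have ih' : ∀ S' T', S' ⊆ U.erase ℓ → T' ⊆ U.erase ℓ → S'.card = T'.card →
      TidyMovable G (U.erase ℓ) S' T' := fun _ _ => ih _ (erase_ssubset hℓU) hU'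
  by_cases hℓS : ℓ ∈ S <;> by_cases hℓT : ℓ ∈ T
  · obtain ⟨n, hn, Xs, M, h⟩ := ih' (S.erase ℓ) (T.erase ℓ) (erase_subset_erase ℓ hS)
      (erase_subset_erase ℓ hT) (by rw [card_erase_of_mem hℓS, card_erase_of_mem hℓT, hcard])
    have h' := h.insert (notMem_erase ℓ U) (notMem_erase ℓ S) (notMem_erase ℓ T)
    rw [insert_erase hℓU, insert_erase hℓS, insert_erase hℓT] at h'
    exact ⟨n, hn.trans card_erase_le, _, _, h'⟩
  · exact tidyMovable_of_mem_sdiff ih' hU hS hT hcard hℓS hℓT ht₀T ht₀S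
  · obtain ⟨n, hn, Xs, M, h⟩ :=
      tidyMovable_of_mem_sdiff ih' hU hT hS hcard.symm hℓT hℓS hs₀S hs₀T
    exact ⟨n, hcard ▸ hn, _, _, h.reverse⟩
  · obtain ⟨n, hn, Xs, M, h⟩ :=
      ih' S T (subset_erase.2 ⟨hS, hℓS⟩) (subset_erase.2 ⟨hT, hℓT⟩) hcard
    exact ⟨n, hn, Xs, M, h.mono (erase_subset ℓ U)⟩

end Movement

theorem stmt_10_general {V : Type} [Fintype V] [DecidableEq V] (H : SimpleGraph V)
    (k : ℕ) (X Y : Finset V)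
    (hX : X.card = k) (hY : Y.card = k) (A : Set V) (hA : IsMarginal H A) :
    ∃ n ≤ k, ∃ (Xs : ℕ → Finset V) (M : ℕ → List V),
      IsMovement H n Xs M ∧ Xs 0 = X ∧ Xs n = Y ∧ BalancedMovement n Xs ∧
      ∀ a ∈ A, StronglySingular n Xs M a := by
  obtain ⟨G, hGH, hG, hleaf⟩ := hA.exists_le_preconnected_neighborSet_subsingleton
  have hG' : (G.induce (univ : Finset V)).Preconnected :=
    preconnected_induce_iff_exists_walk.2 fun x _ y _ =>
      ⟨(hG x y).some, fun w _ => mem_coe.2 (mem_univ w)⟩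
  obtain ⟨n, hn, Xs, M, h⟩ :=
    tidyMovable_of_preconnected hG' (subset_univ X) (subset_univ Y) (hX.trans hY.symm)
  exact ⟨n, hX ▸ hn, Xs, M, fun i hi => (h.move i hi).mono hGH, h.start, h.finish, h.balanced,
    fun a ha => h.stronglySingular (hleaf a ha)⟩

/-- For any two distinct vertex sets `X`, `Y` of size `k` in a connected graph
`H` and any marginal set `A`, there is a balanced `X`–`Y` movement of length at
most `k` on `H` such that every vertex of `A` is strongly singular. -/
theorem stmt_10 {V : Type} [Fintype V] [DecidableEq V] (H : SimpleGraph V)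
    (hconn : H.Connected) (k : ℕ) (X Y : Finset V) (hne : X ≠ Y)
    (hX : X.card = k) (hY : Y.card = k) (A : Set V) (hA : IsMarginal H A) :
    ∃ n ≤ k, ∃ (Xs : ℕ → Finset V) (M : ℕ → List V),
      IsMovement H n Xs M ∧ Xs 0 = X ∧ Xs n = Y ∧ BalancedMovement n Xs ∧
      ∀ a ∈ A, StronglySingular n Xs M a :=
  stmt_10_general H k X Y hX hY A hA
end

section
/- Let H be a connected graph, X,Y ⊆ V(H), L an (X,Y)-pairing, and (X,M) an L-movement of length n on H. If x ∈ X ∪ Y is strongly singular with respect to (X,M), then ((X₀ △ {x},…,Xₙ △ {x}), M) is an (L △ x)-movement of length n on H, where L △ x is obtained from L by replacing the vertex (x,0) with (x,∞) or vice versa. -/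
/-- One edge of the trace (multi)graph `R` of a movement: either a token stays
on a vertex `x ∈ X i ∩ X (i+1)` (an edge from `(x,i)` to `(x,i+1)`), or the two
end vertices `u`, `v` of the move `M i` are joined, each at the unique index
(`i` or `i+1`) where it belongs to a configuration. -/
def TraceStep {V : Type} [DecidableEq V] (n : ℕ) (X : ℕ → Finset V)
    (M : ℕ → List V) (p q : V × ℕ) : Prop :=
  (∃ i < n, p.1 = q.1 ∧ p.2 = i ∧ q.2 = i + 1 ∧ p.1 ∈ X i ∧ p.1 ∈ X (i + 1)) ∨
  (∃ i < n, ∃ u v : V, (M i).head? = some u ∧ (M i).getLast? = some v ∧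
    ((p.1 = u ∧ q.1 = v) ∨ (p.1 = v ∧ q.1 = u)) ∧
    p.2 = (if p.1 ∈ X i then i else i + 1) ∧
    q.2 = (if q.1 ∈ X i then i else i + 1))

/-- `(a,s)` and `(b,t)` (with `s, t : Bool`; `false` denotes the first
configuration `X 0` and `true` the last configuration `X n`) lie in the same
component of the trace graph of the movement, i.e. they are joined by the
induced pairing of the movement. -/
def InducedPaired {V : Type} [DecidableEq V] (n : ℕ) (X : ℕ → Finset V)
    (M : ℕ → List V) (a : V) (s : Bool) (b : V) (t : Bool) : Prop :=
  Relation.ReflTransGen (fun p q => TraceStep n X M p q ∨ TraceStep n X M q p)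
    (a, if s then n else 0) (b, if t then n else 0)

/-!
Flipping `x` in every configuration keeps every move a move, because `x` is never an inner vertex
of a move, and on the trace graph it only changes the nodes on `x`. Since the configurations
containing `x` form an interval reaching `0` or `n`, all nodes `(x, j)` of the trace graph lie in
the component of the end node of that interval. Collapsing every node on `x` to that end node
therefore turns paths in the trace graph of `X ∆ x` into paths in the trace graph of `X`, and
conversely since `(X ∆ x) ∆ x = X`; on the terminals the collapse exchanges `(x, 0)` and `(x, ∞)`.
-/

section TraceGraph

variable {V : Type} [DecidableEq V] {n : ℕ} {X : ℕ → Finset V} {M : ℕ → List V}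

abbrev TraceConn (n : ℕ) (X : ℕ → Finset V) (M : ℕ → List V) : V × ℕ → V × ℕ → Prop :=
  Relation.ReflTransGen fun p q => TraceStep n X M p q ∨ TraceStep n X M q p

theorem traceConn_symm {p q : V × ℕ} (h : TraceConn n X M p q) : TraceConn n X M q p := by
  induction h with
  | refl => rfl
  | tail _ hst ih => exact ih.head hst.symm

theorem traceConn_of_forall_mem {x : V} {i j : ℕ} (hij : i ≤ j) (hjn : j ≤ n)
    (hmem : ∀ k, i ≤ k → k ≤ j → x ∈ X k) : TraceConn n X M (x, i) (x, j) := by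
  induction j, hij using Nat.le_induction with
  | base => rfl
  | succ j hij ih =>
    refine (ih (by omega) fun k hik hkj => hmem k hik (by omega)).tail (Or.inl (Or.inl ?_))
    exact ⟨j, by omega, rfl, rfl, rfl, hmem j hij (by omega), hmem (j + 1) (by omega) le_rfl⟩

/-- The end of the occupancy interval of `x`; when `x` occupies no configuration it is junk. -/
def occupancyAnchor (n : ℕ) (X : ℕ → Finset V) (x : V) : ℕ := if x ∈ X 0 then 0 else n

theorem traceConn_occupancyAnchor {x : V} (hs : StronglySingular n X M x) {j : ℕ} (hjn : j ≤ n)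
    (hxj : x ∈ X j) : TraceConn n X M (x, occupancyAnchor n X x) (x, j) := by
  obtain ⟨-, hconv, hend⟩ := hs
  unfold occupancyAnchor
  split_ifs with h0
  · exact traceConn_of_forall_mem j.zero_le hjn fun k _ hkj => hconv 0 k j k.zero_le hkj hjn h0 hxj
  · have hxn : x ∈ X n := by
      rcases hend with hnone | h0' | hn
      · exact absurd hxj (hnone j hjn)
      · exact absurd h0' h0
      · exact hn
    exact traceConn_symm <|
      traceConn_of_forall_mem hjn le_rfl fun k hjk hkn => hconv j k n hjk hkn le_rfl hxj hxn

def moveSlot (X : ℕ → Finset V) (i : ℕ) (w : V) : ℕ := if w ∈ X i then i else i + 1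

theorem mem_moveSlot {i : ℕ} {w : V} (hw : w ∈ X i ∨ w ∈ X (i + 1)) : w ∈ X (moveSlot X i w) := by
  unfold moveSlot
  split_ifs with h
  · exact h
  · exact hw.resolve_left h

theorem moveSlot_symmDiff_singleton {x w : V} (hw : w ≠ x) (i : ℕ) :
    moveSlot (fun j => symmDiff (X j) {x}) i w = moveSlot X i w := by
  simp [moveSlot, Finset.mem_symmDiff, hw]

theorem traceConn_move {i : ℕ} (hi : i < n) {u v w : V} (hu : (M i).head? = some u)
    (hv : (M i).getLast? = some v) (hw : w = u ∨ w = v) :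
    TraceConn n X M (w, moveSlot X i w) (u, moveSlot X i u) := by
  rcases hw with rfl | rfl
  · rfl
  · exact .single (Or.inr (Or.inr ⟨i, hi, u, _, hu, hv, Or.inl ⟨rfl, rfl⟩, rfl, rfl⟩))

theorem IsMovement.mem_symmDiff_of_endpoint {H : SimpleGraph V} (h : IsMovement H n X M)
    {i : ℕ} (hi : i < n) {w : V} (hw : (M i).head? = some w ∨ (M i).getLast? = some w) :
    w ∈ symmDiff (X i) (X (i + 1)) := by
  obtain ⟨-, -, -, ⟨u, v, -, hu, hv, hsd⟩, -⟩ := h i hi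
  rw [hsd]
  rcases hw with hw | hw
  · simp [Option.some.inj (hw.symm.trans hu)]
  · simp [Option.some.inj (hw.symm.trans hv)]

def collapseToAnchor (n : ℕ) (X : ℕ → Finset V) (x : V) (p : V × ℕ) : V × ℕ :=
  if p.1 = x then (x, occupancyAnchor n X x) else p

variable {H : SimpleGraph V} {x : V}

theorem traceConn_collapseToAnchor_endpoint (h : IsMovement H n X M)
    (hs : StronglySingular n X M x) {i : ℕ} (hi : i < n) {w : V}
    (hw : (M i).head? = some w ∨ (M i).getLast? = some w) :
    TraceConn n X M (collapseToAnchor n X x (w, moveSlot (fun j => symmDiff (X j) {x}) i w))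
      (w, moveSlot X i w) := by
  by_cases hwx : w = x
  · subst hwx
    rw [collapseToAnchor, if_pos rfl]
    refine traceConn_occupancyAnchor hs (by unfold moveSlot; split_ifs <;> omega) (mem_moveSlot ?_)
    have := h.mem_symmDiff_of_endpoint hi hw
    rw [Finset.mem_symmDiff] at this
    tauto
  · rw [collapseToAnchor, if_neg hwx, moveSlot_symmDiff_singleton hwx]

theorem traceConn_collapseToAnchor_of_traceStep (h : IsMovement H n X M)
    (hs : StronglySingular n X M x) {p q : V × ℕ}
    (hpq : TraceStep n (fun i => symmDiff (X i) {x}) M p q) :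
    TraceConn n X M (collapseToAnchor n X x p) (collapseToAnchor n X x q) := by
  rcases hpq with ⟨i, hi, hpq1, hp2, hq2, hpi, hpi'⟩ | ⟨i, hi, u, v, hu, hv, huv, hp2, hq2⟩
  · obtain ⟨w, j⟩ := p
    obtain ⟨w', j'⟩ := q
    dsimp only at hpq1 hp2 hq2 hpi hpi'
    subst hpq1 hp2 hq2
    by_cases hwx : w = x
    · simp only [collapseToAnchor, hwx, if_true]
      rfl
    · simp only [collapseToAnchor, hwx, if_false]
      simp only [Finset.mem_symmDiff, Finset.mem_singleton, hwx, not_false_eq_true, and_true,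
        false_and, or_false] at hpi hpi'
      exact .single (Or.inl (Or.inl ⟨j, hi, rfl, rfl, rfl, hpi, hpi'⟩))
  · -- both ends of the move are joined to the node of its head in the trace graph of `X`
    have to_head : ∀ r : V × ℕ, (r.1 = u ∨ r.1 = v) →
        r.2 = moveSlot (fun j => symmDiff (X j) {x}) i r.1 →
        TraceConn n X M (collapseToAnchor n X x r) (u, moveSlot X i u) := by
      rintro ⟨w, j⟩ hw hj
      dsimp only at hw hj
      subst hj
      exact (traceConn_collapseToAnchor_endpoint h hs hi
        (hw.imp (fun e => e ▸ hu) (fun e => e ▸ hv))).trans (traceConn_move hi hu hv hw)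
    rcases huv with ⟨hp, hq⟩ | ⟨hp, hq⟩
    · exact (to_head p (.inl hp) hp2).trans (traceConn_symm (to_head q (.inr hq) hq2))
    · exact (to_head p (.inr hp) hp2).trans (traceConn_symm (to_head q (.inl hq) hq2))

theorem traceConn_collapseToAnchor (h : IsMovement H n X M) (hs : StronglySingular n X M x)
    {p q : V × ℕ} (hpq : TraceConn n (fun i => symmDiff (X i) {x}) M p q) :
    TraceConn n X M (collapseToAnchor n X x p) (collapseToAnchor n X x q) := by
  induction hpq with
  | refl => rfl
  | tail _ hst ih =>
    exact ih.trans <| hst.elim (traceConn_collapseToAnchor_of_traceStep h hs)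
      fun hqp => traceConn_symm (traceConn_collapseToAnchor_of_traceStep h hs hqp)

theorem IsMovement.symmDiff_singleton (h : IsMovement H n X M) (hs : StronglySingular n X M x) :
    IsMovement H n (fun i => symmDiff (X i) {x}) M := by
  intro i hi
  obtain ⟨hchain, hnodup, hlen, ⟨u, v, huv, hu, hv, hsd⟩, hdisj⟩ := h i hi
  refine ⟨hchain, hnodup, hlen, ⟨u, v, huv, hu, hv, ?_⟩, fun w hw => ?_⟩
  · rwa [symmDiff_symmDiff_symmDiff_comm, symmDiff_self, symmDiff_bot]
  · by_cases hwx : w = x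
    · subst hwx
      have := h.mem_symmDiff_of_endpoint hi (hs.1 i hi hw)
      simp only [Finset.mem_symmDiff, Finset.mem_inter, Finset.mem_singleton] at this ⊢
      tauto
    · simpa [Finset.mem_symmDiff, hwx] using hdisj w hw

theorem StronglySingular.symmDiff_singleton (hs : StronglySingular n X M x)
    (hx : x ∈ X 0 ∪ X n) : StronglySingular n (fun i => symmDiff (X i) {x}) M x := by
  obtain ⟨hinner, hconv, -⟩ := hs
  have hmem : ∀ i, x ∈ symmDiff (X i) {x} ↔ x ∉ X i := by simp [Finset.mem_symmDiff]
  rw [Finset.mem_union] at hx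
  refine ⟨hinner, fun i j l hij hjl hln hi hl => ?_, ?_⟩
  · rw [hmem] at hi hl ⊢
    intro hj
    rcases hx with h0 | hn
    · exact hi (hconv 0 i j i.zero_le hij (hjl.trans hln) h0 hj)
    · exact hl (hconv j l n hjl hln le_rfl hj hn)
  · simp only [hmem, not_not]
    by_cases hboth : x ∈ X 0 ∧ x ∈ X n
    · exact .inl fun i hi => hconv 0 i n i.zero_le hi le_rfl hboth.1 hboth.2
    · tauto

theorem collapseToAnchor_end (hx : x ∈ X 0 ∪ X n) {c : V} {r : Bool}
    (hc : if r then c ∈ symmDiff (X n) {x} else c ∈ symmDiff (X 0) {x}) :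
    collapseToAnchor n X x (c, if r then n else 0) =
      (c, if (if c = x then !r else r) then n else 0) := by
  by_cases hcx : c = x
  · subst hcx
    cases r <;> simp_all [collapseToAnchor, occupancyAnchor, Finset.mem_symmDiff]
  · simp [collapseToAnchor, hcx]

theorem collapseToAnchor_symmDiff_singleton_end (hx : x ∈ X 0 ∪ X n) {c : V} {r : Bool}
    (hc : if r then c ∈ symmDiff (X n) {x} else c ∈ symmDiff (X 0) {x}) :
    collapseToAnchor n (fun i => symmDiff (X i) {x}) x
      (c, if (if c = x then !r else r) then n else 0) = (c, if r then n else 0) := by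
  by_cases hcx : c = x
  · subst hcx
    cases r <;> simp_all [collapseToAnchor, occupancyAnchor, Finset.mem_symmDiff]
  · simp [collapseToAnchor, hcx]

end TraceGraph

/-- If `x ∈ X₀ ∪ Xₙ` is strongly singular with respect to an `L`-movement
`(X, M)` of length `n`, then `(X ∆ x, M)` is an `(L ∆ x)`-movement of length
`n`: replacing each configuration `X i` by `X i ∆ {x}` again yields a movement,
and its induced pairing is obtained from that of `(X, M)` by exchanging the
roles of `(x, 0)` and `(x, ∞)`. -/
theorem stmt_12 {V : Type} [DecidableEq V] (H : SimpleGraph V) (n : ℕ)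
    (X : ℕ → Finset V) (M : ℕ → List V) (h : IsMovement H n X M)
    (x : V) (hx : x ∈ X 0 ∪ X n) (hsing : StronglySingular n X M x) :
    IsMovement H n (fun i => symmDiff (X i) {x}) M ∧
    ∀ (a b : V) (s t : Bool),
      (if s then a ∈ symmDiff (X n) {x} else a ∈ symmDiff (X 0) {x}) →
      (if t then b ∈ symmDiff (X n) {x} else b ∈ symmDiff (X 0) {x}) →
      (InducedPaired n (fun i => symmDiff (X i) {x}) M a s b t ↔
        InducedPaired n X M a (if a = x then !s else s) b (if b = x then !t else t)) := by
  have hmov := h.symmDiff_singleton hsing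
  have hsing' := hsing.symmDiff_singleton hx
  refine ⟨hmov, fun a b s t ha hb => ⟨fun hab => ?_, fun hab => ?_⟩⟩
  · have := traceConn_collapseToAnchor h hsing hab
    rwa [collapseToAnchor_end hx ha, collapseToAnchor_end hx hb] at this
  · have hflip : (fun i => symmDiff (symmDiff (X i) {x}) {x}) = X :=
      funext fun i => symmDiff_symmDiff_cancel_right _ _
    rw [← hflip] at hab
    have := traceConn_collapseToAnchor hmov hsing' hab
    rwa [collapseToAnchor_symmDiff_singleton_end hx ha,
      collapseToAnchor_symmDiff_singleton_end hx hb] at this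
end

section
/- Let H be a finite graph that is not 2-linked, let k ≥ 3, and let G be the join of H with an edgeless graph K on 2k−4 vertices. Then G is not k-linked. -/
/-- The join `H * K` of `H` with an edgeless graph `K` on `m` vertices:
disjoint union plus all edges between `V(H)` and `V(K)`. -/
def joinWithEdgeless {W : Type} (H : SimpleGraph W) (m : ℕ) :
    SimpleGraph (W ⊕ Fin m) where
  Adj x y :=
    match x, y with
    | Sum.inl u, Sum.inl v => H.Adj u v
    | Sum.inl _, Sum.inr _ => True
    | Sum.inr _, Sum.inl _ => True
    | Sum.inr _, Sum.inr _ => False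
  symm := by
    refine ⟨?_⟩
    rintro (u | i) (v | j) h
    · exact H.adj_symm h
    · trivial
    · trivial
    · exact h.elim
  loopless := by
    refine ⟨?_⟩
    rintro (u | i) h
    · exact H.irrefl h
    · exact h

/-!
Pair up the `2k - 4` vertices of the edgeless part `K` as the terminals `s₃, t₃, …, s_k, t_k`,
and put a pair of terminals witnessing that `H` is not `2`-linked in front. The paths `P₃, …, P_k`
of a linkage then contain every vertex of `K` between them, so `P₁` and `P₂` lie in `H` and link
the two pairs there.
-/

open SimpleGraph Function

theorem SimpleGraph.Walk.exists_support_map_eq_of_support_subset_range {V W : Type}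
    {G : SimpleGraph V} {H : SimpleGraph W} (f : H ↪g G) {x y : V} (p : G.Walk x y)
    (hp : ∀ v ∈ p.support, v ∈ Set.range f) {a b : W} (ha : f a = x) (hb : f b = y) :
    ∃ q : H.Walk a b, q.support.map f = p.support := by
  induction p generalizing a with
  | nil =>
    obtain rfl := f.injective (ha.trans hb.symm)
    exact ⟨.nil, by simp [ha]⟩
  | cons hadj p ih =>
    subst ha
    obtain ⟨c, rfl⟩ := hp _ (List.mem_cons_of_mem _ p.start_mem_support)
    obtain ⟨q, hq⟩ := ih (fun v hv => hp v (List.mem_cons_of_mem _ hv)) rfl hb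
    exact ⟨.cons (f.map_adj_iff.mp hadj) q, by simp [hq]⟩

theorem Function.Injective.sum_elim_append {α β : Type} {m n : ℕ} {s t : Fin m → α}
    {u v : Fin n → β} (hst : Injective (Sum.elim s t)) (huv : Injective (Sum.elim u v)) :
    Injective (Sum.elim (Fin.append (Sum.inl ∘ s) (Sum.inr ∘ u))
      (Fin.append (Sum.inl ∘ t) (Sum.inr ∘ v))) := by
  obtain ⟨hs, ht, hst⟩ := Sum.elim_injective.mp hst
  obtain ⟨hu, hv, huv⟩ := Sum.elim_injective.mp huv
  have hts : ∀ i j, t i ≠ s j := fun i j h => hst j i h.symm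
  have hvu : ∀ i j, v i ≠ u j := fun i j h => huv j i h.symm
  rintro (i | i) (j | j) h <;>
    induction i using Fin.addCases <;> induction j using Fin.addCases <;>
    simp_all [Fin.append_left, Fin.append_right, hs.eq_iff, ht.eq_iff, hu.eq_iff, hv.eq_iff]

def joinWithEdgeless.inlEmbedding {W : Type} (H : SimpleGraph W) (m : ℕ) :
    H ↪g joinWithEdgeless H m :=
  ⟨Embedding.inl, Iff.rfl⟩

@[simp]
theorem joinWithEdgeless.inlEmbedding_apply {W : Type} (H : SimpleGraph W) (m : ℕ) (a : W) :
    joinWithEdgeless.inlEmbedding H m a = Sum.inl a :=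
  rfl

theorem IsLinked.of_joinWithEdgeless {W : Type} [Fintype W] {H : SimpleGraph W} {n : ℕ}
    (h : IsLinked (joinWithEdgeless H (n + n)) (2 + n)) : IsLinked H 2 := by
  obtain ⟨hcard, hlink⟩ := h
  refine ⟨by simp only [Fintype.card_sum, Fintype.card_fin] at hcard; omega,
    fun s₀ t₀ hst₀ => ?_⟩
  set s := Fin.append (Sum.inl ∘ s₀) (Sum.inr ∘ Fin.castAdd n)
  set t := Fin.append (Sum.inl ∘ t₀) (Sum.inr ∘ Fin.natAdd n)
  obtain ⟨P, hpath, hdisj⟩ := hlink s t (hst₀.sum_elim_append finSumFinEquiv.injective)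
  have hK_covered : ∀ x : Fin (n + n), ∃ j : Fin n, Sum.inr x ∈ (P (Fin.natAdd 2 j)).support := by
    intro x
    induction x using Fin.addCases with
    | left j => exact ⟨j, by convert (P _).start_mem_support; simp [s, Fin.append_right]⟩
    | right j => exact ⟨j, by convert (P _).end_mem_support; simp [t, Fin.append_right]⟩
  have hP_range : ∀ i : Fin 2, ∀ v ∈ (P (Fin.castAdd n i)).support,
      v ∈ Set.range (joinWithEdgeless.inlEmbedding H (n + n)) := by
    rintro i (a | x) hv
    · exact ⟨a, rfl⟩
    · obtain ⟨j, hj⟩ := hK_covered x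
      have hne : Fin.natAdd 2 j ≠ Fin.castAdd n i := by
        simp only [ne_eq, Fin.ext_iff, Fin.val_natAdd, Fin.val_castAdd]; omega
      exact (hdisj _ _ hne _ hj hv).elim
  choose Q hQ using fun i =>
    (P (Fin.castAdd n i)).exists_support_map_eq_of_support_subset_range _ (hP_range i)
      (a := s₀ i) (b := t₀ i) (by simp [s, Fin.append_left]) (by simp [t, Fin.append_left])
  refine ⟨Q, fun i => ?_, fun i j hij v hvi hvj => ?_⟩
  · have := (hpath (Fin.castAdd n i)).support_nodup
    rw [← hQ i] at this
    exact .mk' ((List.nodup_map_iff (Embedding.injective _)).mp this)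
  · refine hdisj _ _ ((Fin.castAdd_injective _ _).ne hij) (Sum.inl v) ?_ ?_
    · rw [← hQ i]; exact List.mem_map_of_mem hvi
    · rw [← hQ j]; exact List.mem_map_of_mem hvj

/-- If `H` is a finite graph that is not `2`-linked and `k ≥ 3`, then the join
of `H` with an edgeless graph on `2k − 4` vertices is not `k`-linked. -/
theorem stmt_16 {W : Type} [Fintype W] (H : SimpleGraph W) (k : ℕ) (hk : 3 ≤ k)
    (hH : ¬ IsLinked H 2) :
    ¬ IsLinked (joinWithEdgeless H (2 * k - 4)) k := by
  obtain ⟨n, rfl⟩ := Nat.exists_eq_add_of_le (Nat.le_of_succ_le hk)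
  rw [show 2 * (2 + n) - 4 = n + n by omega]
  exact fun h => hH h.of_joinWithEdgeless
end
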